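/- Let a : ℤ → ℝ be not identically zero and satisfy |a_k| ≤ c λ^{|k|} for all k ∈ ℤ, for some c > 0 and 0 < λ < 1. Define φ₄(x) = Σ_{k∈ℤ} a_k N₄(x − k), where N₄ is the cubic B-spline, and set σ₄²(t) = Σ_{k∈ℤ} φ₄²(t − k). Then σ₄² attains its absolute maximum over ℝ exactly at the integer points t = l ∈ ℤ, and the maximal value is σ₄²(l) = (1/36) Σ_{k∈ℤ} (a_{k−1} + 4a_k + a_{k+1})². -/

import Mathlib

noncomputable section

/-- The cubic B-spline `N₄` (with `N₄(x) = N₄(4 − x)` for `2 ≤ x ≤ 4`). -/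
def N4 (x : ℝ) : ℝ :=
  if 0 ≤ x ∧ x ≤ 1 then x ^ 3 / 6
  else if 1 ≤ x ∧ x ≤ 2 then 2 / 3 - (1 / 2) * x * (x - 2) ^ 2
  else if 2 ≤ x ∧ x ≤ 3 then 2 / 3 - (1 / 2) * (4 - x) * ((4 - x) - 2) ^ 2
  else if 3 ≤ x ∧ x ≤ 4 then (4 - x) ^ 3 / 6
  else 0

/-- `φ₄ = Σ_k a_k N₄(· − k)`. -/
def phi4 (a : ℤ → ℝ) (x : ℝ) : ℝ := ∑' k : ℤ, a k * N4 (x - k)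

/-- The variance function `σ₄²(t) = Σ_k φ₄²(t − k)`. -/
def sigma4sq (a : ℤ → ℝ) (t : ℝ) : ℝ := ∑' k : ℤ, (phi4 a (t - k)) ^ 2

lemma N4_zero {x : ℝ} (h : x ≤ 0 ∨ 4 ≤ x) : N4 x = 0 := by
  unfold N4
  rcases h with h | h <;> split_ifs with h1 h2 h3 h4 <;>
    first
      | rfl
      | (have hx : x = 0 := le_antisymm h h1.1; rw [hx]; norm_num)
      | (exfalso; rcases h1 with ⟨ha, hb⟩; linarith)
      | (exfalso; rcases h2 with ⟨ha, hb⟩; linarith)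
      | (exfalso; rcases h3 with ⟨ha, hb⟩; linarith)
      | (exfalso; rcases h4 with ⟨ha, hb⟩; linarith)
      | (have hx : x = 4 := le_antisymm h4.2 h; rw [hx]; norm_num)

lemma N4_u {u : ℝ} (h0 : 0 ≤ u) (h1 : u < 1) : N4 u = u ^ 3 / 6 := by
  rw [N4, if_pos ⟨h0, h1.le⟩]

lemma N4_u1 {u : ℝ} (h0 : 0 ≤ u) (h1 : u < 1) :
    N4 (u + 1) = 2 / 3 - (1 / 2) * (u + 1) * ((u + 1) - 2) ^ 2 := by
  rw [N4]
  by_cases ha : 0 ≤ u + 1 ∧ u + 1 ≤ 1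
  · rw [if_pos ha]
    have hu : u = 0 := le_antisymm (by linarith [ha.2]) h0
    rw [hu]; norm_num
  · rw [if_neg ha, if_pos ⟨by linarith, by linarith⟩]

lemma N4_u2 {u : ℝ} (h0 : 0 ≤ u) (h1 : u < 1) :
    N4 (u + 2) = 2 / 3 - (1 / 2) * (4 - (u + 2)) * ((4 - (u + 2)) - 2) ^ 2 := by
  rw [N4, if_neg (by rintro ⟨_, hb⟩; linarith)]
  by_cases hb : 1 ≤ u + 2 ∧ u + 2 ≤ 2
  · rw [if_pos hb]
    have hu : u = 0 := le_antisymm (by linarith [hb.2]) h0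
    rw [hu]; norm_num
  · rw [if_neg hb, if_pos ⟨by linarith, by linarith⟩]

lemma N4_u3 {u : ℝ} (h0 : 0 ≤ u) (h1 : u < 1) :
    N4 (u + 3) = (4 - (u + 3)) ^ 3 / 6 := by
  rw [N4, if_neg (by rintro ⟨_, hb⟩; linarith), if_neg (by rintro ⟨_, hb⟩; linarith)]
  by_cases hcc : 2 ≤ u + 3 ∧ u + 3 ≤ 3
  · rw [if_pos hcc]
    have hu : u = 0 := le_antisymm (by linarith [hcc.2]) h0
    rw [hu]; norm_num
  · rw [if_neg hcc, if_pos ⟨by linarith, by linarith⟩]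
section Exp
variable {a : ℤ → ℝ} {c lam : ℝ}

lemma summable_geom_int (h0 : 0 ≤ lam) (h1 : lam < 1) :
    Summable (fun k : ℤ => lam ^ k.natAbs) := by
  apply Summable.of_nat_of_neg <;>
    · simp only [Int.natAbs_natCast, Int.natAbs_neg]
      exact summable_geometric_of_lt_one h0 h1

lemma summable_geom_shift (h0 : 0 ≤ lam) (h1 : lam < 1) (i : ℤ) :
    Summable (fun m : ℤ => lam ^ (m - i).natAbs) := by
  have := (Equiv.subRight i).summable_iff
    (f := fun k : ℤ => lam ^ k.natAbs)
  exact this.2 (summable_geom_int h0 h1)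

lemma abs_a_le (hc : 0 < c) (h0 : 0 ≤ lam) (h1 : lam < 1)
    (hdecay : ∀ k : ℤ, |a k| ≤ c * lam ^ k.natAbs) (k : ℤ) : |a k| ≤ c := by
  calc |a k| ≤ c * lam ^ k.natAbs := hdecay k
    _ ≤ c * 1 := by
        have := pow_le_one₀ h0 h1.le (n := k.natAbs)
        nlinarith
    _ = c := mul_one c

lemma summable_aa (hc : 0 < c) (h0 : 0 ≤ lam) (h1 : lam < 1)
    (hdecay : ∀ k : ℤ, |a k| ≤ c * lam ^ k.natAbs) (i j : ℤ) :
    Summable (fun m : ℤ => a (m - i) * a (m - j)) := by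
  apply Summable.of_abs
  apply Summable.of_nonneg_of_le (fun m => abs_nonneg _)
    (f := fun m => (c * c) * lam ^ (m - i).natAbs)
  · intro m
    rw [abs_mul]
    have h2 := hdecay (m - i)
    have h3 := abs_a_le hc h0 h1 hdecay (m - j)
    have h4 : (0:ℝ) ≤ |a (m - i)| := abs_nonneg _
    have h5 : (0:ℝ) ≤ |a (m - j)| := abs_nonneg _
    nlinarith
  · exact (summable_geom_shift h0 h1 i).mul_left _

/-- autocorrelation -/
def rr (a : ℤ → ℝ) (n : ℤ) : ℝ := ∑' m : ℤ, a m * a (m - n)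

lemma shift_eq (i j : ℤ) : ∑' m : ℤ, a (m - i) * a (m - j) = rr a (j - i) := by
  rw [rr, ← (Equiv.subRight i).tsum_eq (fun m => a m * a (m - (j - i)))]
  apply tsum_congr
  intro m
  simp only [Equiv.subRight_apply]
  rw [show m - i - (j - i) = m - j by ring]

lemma expand (hc : 0 < c) (h0 : 0 ≤ lam) (h1 : lam < 1)
    (hdecay : ∀ k : ℤ, |a k| ≤ c * lam ^ k.natAbs) (q0 q1 q2 q3 : ℝ) :
    ∑' m : ℤ, (q0 * a m + q1 * a (m-1) + q2 * a (m-2) + q3 * a (m-3))^2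
    = (q0^2+q1^2+q2^2+q3^2) * rr a 0 + 2*(q0*q1+q1*q2+q2*q3) * rr a 1
      + 2*(q0*q2+q1*q3) * rr a 2 + 2*(q0*q3) * rr a 3 := by
  have key : ∀ (q : ℝ) (i j : ℤ),
      HasSum (fun m : ℤ => q * (a (m - i) * a (m - j))) (q * rr a (j - i)) := by
    intro q i j
    have h := (summable_aa hc h0 h1 hdecay i j).hasSum
    rw [shift_eq i j] at h
    exact h.mul_left q
  have b1 := (key (q0^2) 0 0).add (key (q1^2) 1 1)
  have b2 := b1.add (key (q2^2) 2 2)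
  have b3 := b2.add (key (q3^2) 3 3)
  have b4 := b3.add (key (2*(q0*q1)) 0 1)
  have b5 := b4.add (key (2*(q1*q2)) 1 2)
  have b6 := b5.add (key (2*(q2*q3)) 2 3)
  have b7 := b6.add (key (2*(q0*q2)) 0 2)
  have b8 := b7.add (key (2*(q1*q3)) 1 3)
  have big := b8.add (key (2*(q0*q3)) 0 3)
  have eqf : (fun m : ℤ => (q0 * a m + q1 * a (m-1) + q2 * a (m-2) + q3 * a (m-3))^2)
      = (fun m : ℤ =>
        q0^2 * (a (m - 0) * a (m - 0)) + q1^2 * (a (m-1) * a (m-1)) +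
        q2^2 * (a (m-2) * a (m-2)) + q3^2 * (a (m-3) * a (m-3)) +
        2*(q0*q1) * (a (m-0) * a (m-1)) + 2*(q1*q2) * (a (m-1) * a (m-2)) +
        2*(q2*q3) * (a (m-2) * a (m-3)) + 2*(q0*q2) * (a (m-0) * a (m-2)) +
        2*(q1*q3) * (a (m-1) * a (m-3)) + 2*(q0*q3) * (a (m-0) * a (m-3))) := by
    funext m
    simp only [sub_zero]
    ring
  rw [eqf, big.tsum_eq]
  norm_num
  ring
end Exp

section Exp2
variable {a : ℤ → ℝ} {c lam : ℝ}

lemma summable_sq (hc : 0 < c) (h0 : 0 ≤ lam) (h1 : lam < 1)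
    (hdecay : ∀ k : ℤ, |a k| ≤ c * lam ^ k.natAbs) (q0 q1 q2 q3 : ℝ) :
    Summable (fun m : ℤ =>
      (q0 * a m + q1 * a (m-1) + q2 * a (m-2) + q3 * a (m-3))^2) := by
  have sa2 : ∀ i : ℤ, Summable (fun m : ℤ => (a (m - i))^2) := by
    intro i
    have h := summable_aa hc h0 h1 hdecay i i
    simpa only [pow_two] using h
  apply Summable.of_nonneg_of_le (fun m => sq_nonneg _)
    (f := fun m : ℤ => 4*(q0^2*(a (m-0))^2) + 4*(q1^2*(a (m-1))^2)
      + 4*(q2^2*(a (m-2))^2) + 4*(q3^2*(a (m-3))^2))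
  · intro m
    simp only [sub_zero]
    nlinarith [sq_nonneg (q0*a m - q1*a (m-1)), sq_nonneg (q0*a m - q2*a (m-2)),
      sq_nonneg (q0*a m - q3*a (m-3)), sq_nonneg (q1*a (m-1) - q2*a (m-2)),
      sq_nonneg (q1*a (m-1) - q3*a (m-3)), sq_nonneg (q2*a (m-2) - q3*a (m-3))]
  · exact ((((sa2 0).mul_left (q0^2)).mul_left 4).add
      ((((sa2 1).mul_left (q1^2)).mul_left 4).add
      ((((sa2 2).mul_left (q2^2)).mul_left 4).add
      (((sa2 3).mul_left (q3^2)).mul_left 4)))).congr (by intro m; ring)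

lemma phi4_eq {u : ℝ} (h0u : 0 ≤ u) (h1u : u < 1) (m : ℤ) :
    phi4 a (u + m) = N4 u * a m + N4 (u+1) * a (m-1) + N4 (u+2) * a (m-2)
      + N4 (u+3) * a (m-3) := by
  rw [phi4]
  rw [tsum_eq_sum (s := ({m, m-1, m-2, m-3} : Finset ℤ)) ?side]
  case side =>
    intro k hk
    simp only [Finset.mem_insert, Finset.mem_singleton] at hk
    push_neg at hk
    have hor : k ≤ m - 4 ∨ m + 1 ≤ k := by omega
    have hz : N4 (u + ↑m - ↑k) = 0 := by
      apply N4_zero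
      rcases hor with h | h
      · right
        have : ((k:ℝ)) ≤ (m:ℝ) - 4 := by exact_mod_cast h
        linarith
      · left
        have : ((m:ℝ)) + 1 ≤ (k:ℝ) := by exact_mod_cast h
        linarith
    rw [hz, mul_zero]
  rw [Finset.sum_insert (by simp only [Finset.mem_insert, Finset.mem_singleton]; omega),
    Finset.sum_insert (by simp only [Finset.mem_insert, Finset.mem_singleton]; omega),
    Finset.sum_insert (by simp only [Finset.mem_singleton]; omega),
    Finset.sum_singleton]
  push_cast
  rw [show u + (m:ℝ) - m = u by ring, show u + (m:ℝ) - (m-1) = u+1 by ring,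
    show u + (m:ℝ) - (m-2) = u+2 by ring, show u + (m:ℝ) - (m-3) = u+3 by ring]
  ring

lemma sigma_eq (t : ℝ) :
    sigma4sq a t = ∑' m : ℤ, (phi4 a (Int.fract t + m))^2 := by
  rw [sigma4sq, ← (Equiv.subLeft (⌊t⌋ : ℤ)).tsum_eq
    (fun m : ℤ => (phi4 a (Int.fract t + m))^2)]
  apply tsum_congr
  intro k
  simp only [Equiv.subLeft_apply]
  congr 2
  push_cast
  rw [Int.fract]
  ring

lemma key_identity (hc : 0 < c) (h0 : 0 ≤ lam) (h1 : lam < 1)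
    (hdecay : ∀ k : ℤ, |a k| ≤ c * lam ^ k.natAbs) (t : ℝ) :
    (1/36) * (∑' k : ℤ, (a (k - 1) + 4 * a k + a (k + 1)) ^ 2) - sigma4sq a t
    = ((Int.fract t)^2*(1-Int.fract t)^2/12)
        * (∑' m : ℤ, (a m - 2*a (m-1) + a (m-2))^2)
      + ((Int.fract t)^3*(1-Int.fract t)^3/36)
        * (∑' m : ℤ, (a m - 3*a (m-1) + 3*a (m-2) - a (m-3))^2) := by
  set u := Int.fract t with hu
  have h0u : 0 ≤ u := Int.fract_nonneg t
  have h1u : u < 1 := Int.fract_lt_one t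
  have hM : (∑' k : ℤ, (a (k - 1) + 4 * a k + a (k + 1)) ^ 2)
      = ∑' m : ℤ, ((1:ℝ) * a m + 4 * a (m-1) + 1 * a (m-2) + 0 * a (m-3))^2 := by
    rw [← (Equiv.addRight (1:ℤ)).tsum_eq
      (fun m : ℤ => ((1:ℝ) * a m + 4 * a (m-1) + 1 * a (m-2) + 0 * a (m-3))^2)]
    apply tsum_congr
    intro k
    simp only [Equiv.coe_addRight]
    rw [show k+1-1 = k by ring, show k+1-2 = k-1 by ring, show k+1-3 = k-2 by ring]
    ring
  have hS2 : (∑' m : ℤ, (a m - 2*a (m-1) + a (m-2))^2)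
      = ∑' m : ℤ, ((1:ℝ) * a m + (-2) * a (m-1) + 1 * a (m-2) + 0 * a (m-3))^2 :=
    tsum_congr fun m => by ring
  have hS3 : (∑' m : ℤ, (a m - 3*a (m-1) + 3*a (m-2) - a (m-3))^2)
      = ∑' m : ℤ, ((1:ℝ) * a m + (-3) * a (m-1) + 3 * a (m-2) + (-1) * a (m-3))^2 :=
    tsum_congr fun m => by ring
  have hsig : sigma4sq a t = ∑' m : ℤ,
      (N4 u * a m + N4 (u+1) * a (m-1) + N4 (u+2) * a (m-2) + N4 (u+3) * a (m-3))^2 := by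
    rw [sigma_eq, ← hu]
    exact tsum_congr fun m => by rw [phi4_eq h0u h1u]
  rw [hM, hS2, hS3, hsig, expand hc h0 h1 hdecay, expand hc h0 h1 hdecay,
    expand hc h0 h1 hdecay, expand hc h0 h1 hdecay,
    N4_u h0u h1u, N4_u1 h0u h1u, N4_u2 h0u h1u, N4_u3 h0u h1u]
  ring
end Exp2

/-- for an exponentially decaying, not identically zero `a : ℤ → ℝ`,
the function `σ₄²` attains its absolute maximum over `ℝ` exactly at the integers,
with maximal value `(1/36) Σ_k (a_{k−1} + 4a_k + a_{k+1})²`. -/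
theorem sigma4sq_max_at_integers (a : ℤ → ℝ) (c lam : ℝ)
    (hc : 0 < c) (hlam0 : 0 < lam) (hlam1 : lam < 1)
    (hdecay : ∀ k : ℤ, |a k| ≤ c * lam ^ k.natAbs)
    (hne : ∃ k : ℤ, a k ≠ 0) :
    (∀ t : ℝ, sigma4sq a t ≤ (1 / 36) * ∑' k : ℤ, (a (k - 1) + 4 * a k + a (k + 1)) ^ 2) ∧
    (∀ l : ℤ, sigma4sq a (l : ℝ) =
        (1 / 36) * ∑' k : ℤ, (a (k - 1) + 4 * a k + a (k + 1)) ^ 2) ∧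
    (∀ t : ℝ, sigma4sq a t = (1 / 36) * ∑' k : ℤ, (a (k - 1) + 4 * a k + a (k + 1)) ^ 2 →
        ∃ l : ℤ, t = (l : ℝ)) := by
  have h0 : (0:ℝ) ≤ lam := hlam0.le
  have hS2nn : (0:ℝ) ≤ ∑' m : ℤ, (a m - 2*a (m-1) + a (m-2))^2 :=
    tsum_nonneg fun m => sq_nonneg _
  have hS3nn : (0:ℝ) ≤ ∑' m : ℤ, (a m - 3*a (m-1) + 3*a (m-2) - a (m-3))^2 :=
    tsum_nonneg fun m => sq_nonneg _
  refine ⟨?part1, ?part2, ?part3⟩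
  case part1 =>
    intro t
    have key := key_identity hc h0 hlam1 hdecay t
    have hu0 : 0 ≤ Int.fract t := Int.fract_nonneg t
    have hu1 : Int.fract t < 1 := Int.fract_lt_one t
    have h1u : (0:ℝ) ≤ 1 - Int.fract t := by linarith
    have hc2 : (0:ℝ) ≤ (Int.fract t)^2*(1-Int.fract t)^2/12 := by positivity
    have hc3 : (0:ℝ) ≤ (Int.fract t)^3*(1-Int.fract t)^3/36 := by
      have := mul_nonneg (pow_nonneg hu0 3) (pow_nonneg h1u 3)
      linarith
    nlinarith [mul_nonneg hc2 hS2nn, mul_nonneg hc3 hS3nn]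
  case part2 =>
    intro l
    have key := key_identity hc h0 hlam1 hdecay (l : ℝ)
    rw [Int.fract_intCast] at key
    norm_num at key
    linarith
  case part3 =>
    intro t heq
    by_contra hnol
    push_neg at hnol
    -- fract t ∈ (0,1)
    have hu0 : 0 ≤ Int.fract t := Int.fract_nonneg t
    have hu1 : Int.fract t < 1 := Int.fract_lt_one t
    have hune : Int.fract t ≠ 0 := by
      intro h
      have : t = (⌊t⌋ : ℝ) := by
        have := Int.fract_add_floor t
        rw [h] at this
        linarith
      exact hnol ⌊t⌋ this
    have hupos : 0 < Int.fract t := lt_of_le_of_ne hu0 (Ne.symm hune)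
    have h1upos : 0 < 1 - Int.fract t := by linarith
    have hc2pos : (0:ℝ) < (Int.fract t)^2*(1-Int.fract t)^2/12 := by positivity
    have hc3 : (0:ℝ) ≤ (Int.fract t)^3*(1-Int.fract t)^3/36 := by positivity
    have key := key_identity hc h0 hlam1 hdecay t
    rw [heq] at key
    have hzero : (∑' m : ℤ, (a m - 2*a (m-1) + a (m-2))^2) = 0 := by
      by_contra hne2
      have hpos : 0 < ∑' m : ℤ, (a m - 2*a (m-1) + a (m-2))^2 :=
        lt_of_le_of_ne hS2nn (Ne.symm hne2)
      nlinarith [mul_nonneg hc3 hS3nn, mul_pos hc2pos hpos]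
    -- summability of the S2 summand
    have hsum2 : Summable (fun m : ℤ => (a m - 2*a (m-1) + a (m-2))^2) := by
      have := summable_sq hc h0 hlam1 hdecay 1 (-2) 1 0
      exact this.congr (fun m => by ring)
    -- each term is zero
    have hterm : ∀ m : ℤ, a m - 2*a (m-1) + a (m-2) = 0 := by
      intro m
      have hle : (a m - 2*a (m-1) + a (m-2))^2 ≤ 0 := by
        rw [← hzero]
        exact Summable.le_tsum hsum2 m (fun j _ => sq_nonneg _)
      have : (a m - 2*a (m-1) + a (m-2))^2 = 0 := le_antisymm hle (sq_nonneg _)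
      exact pow_eq_zero_iff (n := 2) (by norm_num) |>.mp this
    -- b m := a m - a (m-1) is constant
    set b : ℤ → ℝ := fun m => a m - a (m-1) with hbdef
    have hb : ∀ m : ℤ, b m = b (m-1) := by
      intro m
      have := hterm m
      simp only [hbdef]
      rw [show m - 1 - 1 = m - 2 by ring]
      linarith
    have hbconst : ∀ m : ℤ, b m = b 0 := by
      intro m
      induction m using Int.induction_on with
      | zero => rfl
      | succ n ih =>
          have := hb ((n:ℤ) + 1)
          rw [show ((n:ℤ) + 1 - 1) = (n:ℤ) by ring] at this
          rw [this, ih]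
      | pred n ih =>
          rw [← hb (-(n:ℤ))]
          exact ih
    -- a ↑n → 0
    have ha0 : Filter.Tendsto (fun n : ℕ => a (n : ℤ)) Filter.atTop (nhds 0) := by
      have hg : Filter.Tendsto (fun n : ℕ => c * lam ^ n) Filter.atTop (nhds 0) := by
        simpa using (tendsto_pow_atTop_nhds_zero_of_lt_one h0 hlam1).const_mul c
      exact squeeze_zero_norm
        (fun n => by simpa [Real.norm_eq_abs] using hdecay (n : ℤ)) hg
    -- b 0 = 0
    have hb0 : b 0 = 0 := by
      have h1 : Filter.Tendsto (fun n : ℕ => b ((n:ℤ) + 1)) Filter.atTop (nhds 0) := by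
        have e : (fun n : ℕ => b ((n:ℤ) + 1))
            = fun n : ℕ => a ((n:ℤ)+1) - a (n:ℤ) := by
          funext n
          simp only [hbdef]
          rw [show ((n:ℤ) + 1 - 1) = (n:ℤ) by ring]
        rw [e]
        have h2 : Filter.Tendsto (fun n : ℕ => a ((n:ℤ)+1)) Filter.atTop (nhds 0) := by
          have hcomp := ha0.comp (Filter.tendsto_add_atTop_nat 1)
          apply hcomp.congr
          intro n
          simp only [Function.comp_apply]
          exact congrArg a (by omega)
        simpa using h2.sub ha0
      have h3 : Filter.Tendsto (fun n : ℕ => b ((n:ℤ) + 1)) Filter.atTop (nhds (b 0)) := by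
        have e : (fun n : ℕ => b ((n:ℤ) + 1)) = fun _ : ℕ => b 0 := by
          funext n; exact hbconst _
        rw [e]; exact tendsto_const_nhds
      exact tendsto_nhds_unique h3 h1
    -- so a is constant
    have haconst : ∀ m : ℤ, a m = a 0 := by
      have hstep : ∀ m : ℤ, a m = a (m - 1) := by
        intro m
        have := hbconst m
        rw [hb0] at this
        simp only [hbdef] at this
        linarith
      intro m
      induction m using Int.induction_on with
      | zero => rfl
      | succ n ih =>
          have := hstep ((n:ℤ) + 1)
          rw [show ((n:ℤ) + 1 - 1) = (n:ℤ) by ring] at this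
          rw [this, ih]
      | pred n ih =>
          rw [← hstep (-(n:ℤ))]
          exact ih
    have ha00 : a 0 = 0 := by
      have e : (fun n : ℕ => a (n:ℤ)) = fun _ : ℕ => a 0 := by
        funext n; exact haconst _
      rw [e] at ha0
      exact tendsto_nhds_unique tendsto_const_nhds ha0
    obtain ⟨k, hk⟩ := hne
    exact hk (by rw [haconst k, ha00])

end
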